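/- arXiv:1103.2964 — 6 statements merged into one kernel-verified Lean document; each statement's English description precedes it below -/
import Mathlib

section
/- Let β ∈ ℝ and let x : ℝ → ℝ³ be a differentiable solution of the amplitude ODE system x′(t) = F_β(x(t)), where F_β(a,b,c) = (6(1−β²)a − 6√2 β bc − 6(b²+c²)a − 3a³, 6(1−β²)b − 6√2 β ac − 6(a²+c²)b − 3b³, 6(1−β²)c − 6√2 β ab − 6(a²+b²)c − 3c³). Then for all t, d/dt V_β(x(t)) = −‖∇V_β(x(t))‖² ≤ 0; in particular t ↦ V_β(x(t)) is nonincreasing, i.e. V_β is a Lyapunov function for the amplitude system. -/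
/-! The amplitude system is the gradient flow of `V_β`: `F_β = -∇V_β`. Hence, by the chain
rule, `d/dt V_β(x(t)) = ⟨∇V_β(x(t)), x'(t)⟩ = -‖∇V_β(x(t))‖²`. -/

/-- The Lyapunov function `V_β` of the amplitude ODE system. -/
noncomputable def V (β a b c : ℝ) : ℝ :=
  -3 * (1 - β ^ 2) * (a ^ 2 + b ^ 2 + c ^ 2) + 6 * Real.sqrt 2 * β * (a * b * c)
    + 3 * (a ^ 2 * b ^ 2 + b ^ 2 * c ^ 2 + a ^ 2 * c ^ 2)
    + 3 / 4 * (a ^ 4 + b ^ 4 + c ^ 4)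

/-- Partial derivative of a function of three real variables in the first variable. -/
noncomputable def pA (f : ℝ → ℝ → ℝ → ℝ) (a b c : ℝ) : ℝ := deriv (fun t => f t b c) a

/-- Partial derivative in the second variable. -/
noncomputable def pB (f : ℝ → ℝ → ℝ → ℝ) (a b c : ℝ) : ℝ := deriv (fun t => f a t c) b

/-- Partial derivative in the third variable. -/
noncomputable def pC (f : ℝ → ℝ → ℝ → ℝ) (a b c : ℝ) : ℝ := deriv (fun t => f a b t) c

/-- The squared Euclidean norm of the gradient `∇V_β`. -/
noncomputable def gradVNormSq (β a b c : ℝ) : ℝ :=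
  (pA (V β) a b c) ^ 2 + (pB (V β) a b c) ^ 2 + (pC (V β) a b c) ^ 2

/-- The right-hand side of the amplitude ODE system. -/
noncomputable def F (β : ℝ) (p : ℝ × ℝ × ℝ) : ℝ × ℝ × ℝ :=
  (6 * (1 - β ^ 2) * p.1 - 6 * Real.sqrt 2 * β * p.2.1 * p.2.2
      - 6 * (p.2.1 ^ 2 + p.2.2 ^ 2) * p.1 - 3 * p.1 ^ 3,
   6 * (1 - β ^ 2) * p.2.1 - 6 * Real.sqrt 2 * β * p.1 * p.2.2
      - 6 * (p.1 ^ 2 + p.2.2 ^ 2) * p.2.1 - 3 * p.2.1 ^ 3,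
   6 * (1 - β ^ 2) * p.2.2 - 6 * Real.sqrt 2 * β * p.1 * p.2.1
      - 6 * (p.1 ^ 2 + p.2.1 ^ 2) * p.2.2 - 3 * p.2.2 ^ 3)

lemma hasDerivAt_V_comp (β : ℝ) {x : ℝ → ℝ × ℝ × ℝ} {x' : ℝ × ℝ × ℝ} {t : ℝ}
    (hx : HasDerivAt x x' t) :
    HasDerivAt (fun s => V β (x s).1 (x s).2.1 (x s).2.2)
      (-((F β (x t)).1 * x'.1 + (F β (x t)).2.1 * x'.2.1 + (F β (x t)).2.2 * x'.2.2)) t := by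
  have ha : HasDerivAt (fun s => (x s).1) x'.1 t := by
    simpa using hx.hasFDerivAt.fst.hasDerivAt
  have hb : HasDerivAt (fun s => (x s).2.1) x'.2.1 t := by
    simpa using hx.hasFDerivAt.snd.fst.hasDerivAt
  have hc : HasDerivAt (fun s => (x s).2.2) x'.2.2 t := by
    simpa using hx.hasFDerivAt.snd.snd.hasDerivAt
  have hV := (((((ha.pow 2).add (hb.pow 2)).add (hc.pow 2)).const_mul (-3 * (1 - β ^ 2))).add
      (((ha.mul hb).mul hc).const_mul (6 * Real.sqrt 2 * β))).add
      (((((ha.pow 2).mul (hb.pow 2)).add ((hb.pow 2).mul (hc.pow 2))).add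
        ((ha.pow 2).mul (hc.pow 2))).const_mul 3) |>.add
      ((((ha.pow 4).add (hb.pow 4)).add (hc.pow 4)).const_mul (3 / 4))
  refine hV.congr_deriv ?_
  simp only [F, Pi.mul_apply, Pi.pow_apply]
  push_cast
  ring

section Gradient

variable (β a b c : ℝ)

lemma pA_V : pA (V β) a b c = -(F β (a, b, c)).1 := by
  have h : HasDerivAt (fun s => V β s b c) (-(F β (a, b, c)).1) a := by
    simpa using hasDerivAt_V_comp β
      ((hasDerivAt_id a).prodMk ((hasDerivAt_const a b).prodMk (hasDerivAt_const a c)))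
  exact h.deriv

lemma pB_V : pB (V β) a b c = -(F β (a, b, c)).2.1 := by
  have h : HasDerivAt (fun s => V β a s c) (-(F β (a, b, c)).2.1) b := by
    simpa using hasDerivAt_V_comp β
      ((hasDerivAt_const b a).prodMk ((hasDerivAt_id b).prodMk (hasDerivAt_const b c)))
  exact h.deriv

lemma pC_V : pC (V β) a b c = -(F β (a, b, c)).2.2 := by
  have h : HasDerivAt (fun s => V β a b s) (-(F β (a, b, c)).2.2) c := by
    simpa using hasDerivAt_V_comp β
      ((hasDerivAt_const c a).prodMk ((hasDerivAt_const c b).prodMk (hasDerivAt_id c)))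
  exact h.deriv

lemma gradVNormSq_eq :
    gradVNormSq β a b c = (F β (a, b, c)).1 ^ 2 + (F β (a, b, c)).2.1 ^ 2
      + (F β (a, b, c)).2.2 ^ 2 := by
  simp only [gradVNormSq, pA_V, pB_V, pC_V, neg_sq]

lemma gradVNormSq_nonneg : 0 ≤ gradVNormSq β a b c := by
  unfold gradVNormSq
  positivity

end Gradient

/-- Along any differentiable solution `x` of the amplitude ODE system
`x' = F_β(x)`, the Lyapunov function `V_β` satisfies
`d/dt V_β(x(t)) = -‖∇V_β(x(t))‖² ≤ 0`; in particular `t ↦ V_β(x(t))` is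
nonincreasing. -/
theorem V_is_Lyapunov (β : ℝ) (x : ℝ → ℝ × ℝ × ℝ)
    (hx : ∀ t : ℝ, HasDerivAt x (F β (x t)) t) :
    (∀ t : ℝ,
      HasDerivAt (fun s => V β (x s).1 (x s).2.1 (x s).2.2)
        (-gradVNormSq β (x t).1 (x t).2.1 (x t).2.2) t ∧
      -gradVNormSq β (x t).1 (x t).2.1 (x t).2.2 ≤ 0) ∧
    Antitone (fun t => V β (x t).1 (x t).2.1 (x t).2.2) := by
  have hV : ∀ t, HasDerivAt (fun s => V β (x s).1 (x s).2.1 (x s).2.2)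
      (-gradVNormSq β (x t).1 (x t).2.1 (x t).2.2) t := fun t => by
    simpa [gradVNormSq_eq, ← sq] using hasDerivAt_V_comp β (hx t)
  have hV_nonpos : ∀ t, -gradVNormSq β (x t).1 (x t).2.1 (x t).2.2 ≤ 0 :=
    fun t => neg_nonpos.mpr (gradVNormSq_nonneg ..)
  exact ⟨fun t => ⟨hV t, hV_nonpos t⟩, antitone_of_hasDerivAt_nonpos hV hV_nonpos⟩
end

section
/- Let 0 ≤ β ≤ 1/√5 and set ā = √(2(1−5β²)/3) and c̄ = 2√2 β. Then the mixed point (ā, ā, −c̄) is a critical point of V_β: ∇V_β(ā, ā, −c̄) = 0. -/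
/-- The gradient `∇V_β`. -/
noncomputable def gradV (β a b c : ℝ) : ℝ × ℝ × ℝ :=
  (pA (V β) a b c, pB (V β) a b c, pC (V β) a b c)

/-!
`V_β` is symmetric in its three arguments, so every partial derivative is `∂ₐV_β` at a permuted
point, and `∂ₐV_β` is read off by viewing `V_β` as a quartic in `a`. At `(ā, ā, -c̄)` the two
distinct partials vanish by a polynomial identity using only `3ā² = 2(1 - 5β²)` and `√2² = 2`.
-/

theorem hasDerivAt_biquadratic_add_linear (p q r s x : ℝ) :
    HasDerivAt (fun t => p + q * t + r * t ^ 2 + s * t ^ 4)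
      (q + 2 * r * x + 4 * s * x ^ 3) x := by
  have h := ((((hasDerivAt_id' x).const_mul q).const_add p).add
    ((hasDerivAt_pow 2 x).const_mul r)).add ((hasDerivAt_pow 4 x).const_mul s)
  exact h.congr_deriv (by norm_num; ring)

namespace V

variable (β : ℝ)

theorem swap_fst_snd (a b c : ℝ) : V β a b c = V β b a c := by
  unfold V; ring

theorem swap_fst_thd (a b c : ℝ) : V β a b c = V β c b a := by
  unfold V; ring

theorem pA_eq (a b c : ℝ) :
    pA (V β) a b c =
      -6 * (1 - β ^ 2) * a + 6 * Real.sqrt 2 * β * b * c + 6 * a * (b ^ 2 + c ^ 2) + 3 * a ^ 3 := by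
  have hquartic : (fun t => V β t b c) = fun t =>
      (-3 * (1 - β ^ 2) * (b ^ 2 + c ^ 2) + 3 * b ^ 2 * c ^ 2 + 3 / 4 * (b ^ 4 + c ^ 4))
        + 6 * Real.sqrt 2 * β * b * c * t
        + (-3 * (1 - β ^ 2) + 3 * (b ^ 2 + c ^ 2)) * t ^ 2 + 3 / 4 * t ^ 4 := by
    funext t; unfold V; ring
  rw [pA, hquartic, (hasDerivAt_biquadratic_add_linear _ _ _ _ a).deriv]
  ring

theorem pB_eq_pA (a b c : ℝ) : pB (V β) a b c = pA (V β) b a c := by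
  simp only [pA, pB, swap_fst_snd β a]

theorem pC_eq_pA (a b c : ℝ) : pC (V β) a b c = pA (V β) c b a := by
  simp only [pA, pC, swap_fst_thd β a]

theorem gradV_mixed_eq_zero {a c : ℝ} (ha : 3 * a ^ 2 = 2 * (1 - 5 * β ^ 2))
    (hc : c = 2 * Real.sqrt 2 * β) : gradV β a a (-c) = 0 := by
  have hsqrt : Real.sqrt 2 ^ 2 = 2 := Real.sq_sqrt zero_le_two
  have hA : pA (V β) a a (-c) = 0 := by
    rw [pA_eq, hc]
    linear_combination (12 * β ^ 2 * a) * hsqrt + (3 * a) * ha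
  have hC : pA (V β) (-c) a a = 0 := by
    rw [pA_eq, hc]
    linear_combination (-24 * Real.sqrt 2 * β ^ 3) * hsqrt + (-6 * Real.sqrt 2 * β) * ha
  simp only [gradV, pB_eq_pA, pC_eq_pA, hA, hC]
  rfl

end V

/-- For `0 ≤ β ≤ 1/√5`, with `ā = √(2(1 - 5β²)/3)` and `c̄ = 2√2 β`, the mixed
point `(ā, ā, -c̄)` is a critical point of `V_β`. -/
theorem mixed_critical_point (β abar cbar : ℝ) (hβ0 : 0 ≤ β)
    (hβ1 : β ≤ 1 / Real.sqrt 5)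
    (habar : abar = Real.sqrt (2 * (1 - 5 * β ^ 2) / 3))
    (hcbar : cbar = 2 * Real.sqrt 2 * β) :
    gradV β abar abar (-cbar) = 0 := by
  have hβsq : 5 * β ^ 2 ≤ 1 := by
    have h := pow_le_pow_left₀ hβ0 hβ1 2
    rw [div_pow, Real.sq_sqrt (by norm_num)] at h
    linarith
  refine V.gradV_mixed_eq_zero β ?_ hcbar
  rw [habar, Real.sq_sqrt (by linarith)]
  ring
end

section
/- Let 0 ≤ β ≤ √5/2 and set ā = −(√2/5)(β + √(5−4β²)). The Hessian matrix of V_β at the hexagonal point (ā, ā, ā) is positive definite if and only if 1/√17 < β < √5/2. -/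
/-- The Hessian matrix of `V_β` (matrix of second partial derivatives). -/
noncomputable def hessV (β a b c : ℝ) : Matrix (Fin 3) (Fin 3) ℝ :=
  !![pA (pA (V β)) a b c, pA (pB (V β)) a b c, pA (pC (V β)) a b c;
     pB (pA (V β)) a b c, pB (pB (V β)) a b c, pB (pC (V β)) a b c;
     pC (pA (V β)) a b c, pC (pB (V β)) a b c, pC (pC (V β)) a b c]

namespace Matrix

variable {ι : Type*} [Fintype ι] [DecidableEq ι]

def diagOffDiag (d e : ℝ) : Matrix ι ι ℝ := of fun i j => if i = j then d else e

theorem diagOffDiag_mulVec (d e : ℝ) (x : ι → ℝ) (i : ι) :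
    (diagOffDiag d e *ᵥ x) i = (d - e) * x i + e * ∑ j, x j := by
  have hentry : ∀ j, (if i = j then d else e) = (d - e) * (if i = j then 1 else 0) + e := by
    intro j
    split_ifs <;> ring
  simp only [diagOffDiag, mulVec, dotProduct, of_apply, hentry, add_mul, mul_assoc,
    Finset.sum_add_distrib, ← Finset.mul_sum, ite_mul, one_mul, zero_mul, Finset.sum_ite_eq]
  simp

theorem dotProduct_diagOffDiag_mulVec (d e : ℝ) (x : ι → ℝ) :
    x ⬝ᵥ diagOffDiag d e *ᵥ x = (d - e) * ∑ i, x i ^ 2 + e * (∑ i, x i) ^ 2 := by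
  simp only [dotProduct, diagOffDiag_mulVec, mul_add, Finset.sum_add_distrib, mul_left_comm (x _),
    ← Finset.mul_sum, ← Finset.sum_mul, ← sq]

theorem posDef_diagOffDiag_iff [Nontrivial ι] (d e : ℝ) :
    (diagOffDiag d e : Matrix ι ι ℝ).PosDef ↔
      0 < d + (Fintype.card ι - 1) * e ∧ 0 < d - e := by
  have hsymm : (diagOffDiag d e : Matrix ι ι ℝ).IsHermitian := by
    ext i j
    simp [diagOffDiag, eq_comm]
  simp only [posDef_iff_dotProduct_mulVec, star_trivial, dotProduct_diagOffDiag_mulVec, hsymm,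
    true_and]
  constructor
  · intro h
    have hn : (0 : ℝ) < Fintype.card ι := by exact_mod_cast Fintype.card_pos
    have hones := h (x := 1) one_ne_zero
    simp only [Pi.one_apply, one_pow, Finset.sum_const, Finset.card_univ, nsmul_eq_mul,
      mul_one] at hones
    obtain ⟨i, j, hij⟩ := exists_pair_ne ι
    have hdiff := h (x := Pi.single i 1 - Pi.single j 1)
      (sub_ne_zero.2 fun heq => by simpa [hij] using congr_fun heq i)
    rw [Fintype.sum_eq_add i j hij fun k hk => by simp [hk.1, hk.2]] at hdiff
    refine ⟨pos_of_mul_pos_right (?_ : 0 < (Fintype.card ι : ℝ) * _) hn.le, ?_⟩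
    · linarith
    · simpa [hij, hij.symm, Finset.sum_sub_distrib] using hdiff
  · rintro ⟨hsum, hdiff⟩ x hx
    have hsq : 0 < ∑ i, x i ^ 2 := by
      simpa [dotProduct, sq] using dotProduct_star_self_pos_iff.2 hx
    rcases le_or_gt 0 e with he | he
    · nlinarith [mul_nonneg he (sq_nonneg (∑ i, x i))]
    · have hcs : (∑ i, x i) ^ 2 ≤ Fintype.card ι * ∑ i, x i ^ 2 := sq_sum_le_card_mul_sum_sq
      nlinarith

end Matrix

theorem hessV_eq_diagOffDiag (β a : ℝ) :
    hessV β a a a =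
      Matrix.diagOffDiag (-6 * (1 - β ^ 2) + 21 * a ^ 2) (6 * √2 * β * a + 12 * a ^ 2) := by
  simp (disch := fun_prop) only [hessV, pA, pB, pC, V, deriv_fun_add, deriv_const_mul_field,
    deriv_mul_const_field, deriv_pow_field, deriv_id'', deriv_const, deriv_const_mul_id,
    one_mul]
  ext i j
  fin_cases i <;> fin_cases j <;> simp [Matrix.diagOffDiag] <;> ring

theorem hessV_hexagonal_eigenvalues {β s a : ℝ} (hs : s ^ 2 = 5 - 4 * β ^ 2)
    (ha : a = -(√2 / 5) * (β + s)) :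
    (-6 * (1 - β ^ 2) + 21 * a ^ 2) + 2 * (6 * √2 * β * a + 12 * a ^ 2) = 12 / 5 * s * (β + s) ∧
      (-6 * (1 - β ^ 2) + 21 * a ^ 2) - (6 * √2 * β * a + 12 * a ^ 2)
        = 12 / 25 * (β + s) * (9 * β - s) := by
  have h2 : √2 ^ 2 = 2 := Real.sq_sqrt zero_le_two
  subst ha
  constructor
  · linear_combination (9 / 5 * (β + s) ^ 2 - 12 / 5 * β * (β + s)) * h2 + 6 / 5 * hs
  · linear_combination (9 / 25 * (β + s) ^ 2 + 6 / 5 * β * (β + s)) * h2 + 6 / 5 * hs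

theorem sqrt_five_sub_pos_iff {β : ℝ} (hβ : 0 ≤ β) : 0 < √(5 - 4 * β ^ 2) ↔ β < √5 / 2 := by
  rw [Real.sqrt_pos, lt_div_iff₀ two_pos, mul_comm, Real.lt_sqrt (by positivity)]
  constructor <;> intro h <;> linarith

theorem sqrt_five_sub_lt_iff {β : ℝ} (hβ : 0 ≤ β) (h5 : 0 ≤ 5 - 4 * β ^ 2) :
    √(5 - 4 * β ^ 2) < 9 * β ↔ 1 / √17 < β := by
  rw [← Real.sqrt_sq (by positivity : 0 ≤ 9 * β), Real.sqrt_lt_sqrt_iff h5, one_div,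
    ← Real.sqrt_inv]
  conv_rhs => rw [← Real.sqrt_sq hβ]
  rw [Real.sqrt_lt_sqrt_iff (by positivity)]
  constructor <;> intro h <;> linarith

/-- For `0 ≤ β ≤ √5/2` and `ā = -(√2/5)(β + √(5 - 4β²))`, the Hessian of
`V_β` at the hexagonal point `(ā,ā,ā)` is positive definite iff
`1/√17 < β < √5/2`. -/
theorem hessian_at_hexagonal (β abar : ℝ) (hβ0 : 0 ≤ β)
    (hβ1 : β ≤ Real.sqrt 5 / 2)
    (habar : abar = -(Real.sqrt 2 / 5) * (β + Real.sqrt (5 - 4 * β ^ 2))) :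
    (hessV β abar abar abar).PosDef ↔
      1 / Real.sqrt 17 < β ∧ β < Real.sqrt 5 / 2 := by
  have h5 : 0 ≤ 5 - 4 * β ^ 2 := by
    have := (Real.le_sqrt (by positivity) (by norm_num)).1 (by linarith : 2 * β ≤ √5)
    linarith
  have hs_pos_iff := sqrt_five_sub_pos_iff hβ0
  have hs_lt_iff := sqrt_five_sub_lt_iff hβ0 h5
  set s := √(5 - 4 * β ^ 2)
  have hs : s ^ 2 = 5 - 4 * β ^ 2 := Real.sq_sqrt h5
  have hβs : 0 < β + s := by nlinarith [Real.sqrt_nonneg (5 - 4 * β ^ 2)]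
  obtain ⟨hsum, hdiff⟩ := hessV_hexagonal_eigenvalues hs habar
  rw [hessV_eq_diagOffDiag, Matrix.posDef_diagOffDiag_iff, Fintype.card_fin]
  norm_num only [hsum, hdiff]
  rw [mul_pos_iff_of_pos_right hβs, mul_pos_iff_of_pos_left (by norm_num),
    mul_pos_iff_of_pos_left (by positivity), sub_pos, hs_pos_iff, hs_lt_iff, and_comm]
end

section
/- Let 0 ≤ β < 1, set a₀ = √(2(1−β²)) and ā = −(√2/5)(β + √(5−4β²)). Then the lamellar energy is strictly below the hexagonal energy, V_β(a₀, 0, 0) < V_β(ā, ā, ā), if and only if β < (1/29)√(551 − 174√6); and the two energies are equal when β = (1/29)√(551 − 174√6). -/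
set_option maxHeartbeats 1000000 in
/-- For `0 ≤ β < 1`, with `a₀ = √(2(1 - β²))` (lamellae) and
`ā = -(√2/5)(β + √(5 - 4β²))` (hexagonally packed spots), the lamellar energy
is strictly below the hexagonal energy iff `β < (1/29)√(551 - 174√6)`, and the
two energies are equal at `β = (1/29)√(551 - 174√6)`. -/
theorem lamellae_vs_hexagonal_energy (β a₀ abar : ℝ) (hβ0 : 0 ≤ β) (hβ1 : β < 1)
    (ha₀ : a₀ = Real.sqrt (2 * (1 - β ^ 2)))
    (habar : abar = -(Real.sqrt 2 / 5) * (β + Real.sqrt (5 - 4 * β ^ 2))) :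
    (V β a₀ 0 0 < V β abar abar abar ↔
      β < (1 / 29) * Real.sqrt (551 - 174 * Real.sqrt 6)) ∧
    (β = (1 / 29) * Real.sqrt (551 - 174 * Real.sqrt 6) →
      V β a₀ 0 0 = V β abar abar abar) := by
  have hx : β ^ 2 < 1 := by nlinarith
  set s : ℝ := Real.sqrt (5 - 4 * β ^ 2) with hs_def
  have hs0 : 0 ≤ s := Real.sqrt_nonneg _
  have hs2 : s ^ 2 = 5 - 4 * β ^ 2 := Real.sq_sqrt (by nlinarith)
  have hr : Real.sqrt 2 ^ 2 = 2 := Real.sq_sqrt (by norm_num)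
  have ha2 : a₀ ^ 2 = 2 * (1 - β ^ 2) := by
    rw [ha₀]; exact Real.sq_sqrt (by nlinarith)
  set q : ℝ := Real.sqrt 6 with hq_def
  have hq0 : 0 ≤ q := Real.sqrt_nonneg _
  have hq2 : q ^ 2 = 6 := Real.sq_sqrt (by norm_num)
  have hq3 : q ≤ 3 := by nlinarith
  have hq53 : 5 / 3 < q := by nlinarith
  set βs : ℝ := (1 / 29) * Real.sqrt (551 - 174 * q) with hβs_def
  have hβs0 : 0 ≤ βs := by positivity
  have hβs2 : βs ^ 2 = (551 - 174 * q) / 841 := by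
    rw [hβs_def, mul_pow, Real.sq_sqrt (by nlinarith)]; ring
  have hβslt : βs ^ 2 < 9 / 29 := by rw [hβs2]; nlinarith
  -- lamellar energy
  have hV0 : V β a₀ 0 0 = -3 * (1 - β ^ 2) ^ 2 := by
    simp only [V]
    linear_combination (3 / 4 * (a₀ ^ 2 - 2 * (1 - β ^ 2))) * ha2
  -- powers of abar
  have habar2 : abar ^ 2 = 2 / 25 * (β + s) ^ 2 := by
    rw [habar]; linear_combination ((β + s) ^ 2 / 25) * hr
  have habar3 : abar ^ 3 = -(2 / 125) * Real.sqrt 2 * (β + s) ^ 3 := by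
    rw [habar]; linear_combination (-(Real.sqrt 2 * (β + s) ^ 3) / 125) * hr
  have habar4 : abar ^ 4 = 4 / 625 * (β + s) ^ 4 := by
    rw [habar]; linear_combination ((Real.sqrt 2 ^ 2 + 2) * (β + s) ^ 4 / 625) * hr
  -- hexagonal energy
  have hVh : V β abar abar abar =
      -18 / 25 * (1 - β ^ 2) * (β + s) ^ 2 - 24 / 125 * β * (β + s) ^ 3
        + 9 / 125 * (β + s) ^ 4 := by
    simp only [V]
    linear_combination (-9 * (1 - β ^ 2)) * habar2 + (6 * Real.sqrt 2 * β) * habar3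
      + (45 / 4) * habar4 + (-(12 / 125) * β * (β + s) ^ 3) * hr
  -- the key difference identity
  have hD : V β abar abar abar - V β a₀ 0 0 =
      6 / 125 * ((25 - 80 * β ^ 2 + 51 * β ^ 4) - 4 * β * s * (5 - 4 * β ^ 2)) := by
    rw [hVh, hV0]
    linear_combination (9 / 125 * s ^ 2 + 12 / 125 * β * s - 9 / 25 + 36 / 125 * β ^ 2) * hs2
  set L : ℝ := 25 - 80 * β ^ 2 + 51 * β ^ 4 with hL_def
  set M : ℝ := 4 * β * s * (5 - 4 * β ^ 2) with hM_def
  have hM0 : 0 ≤ M := by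
    have h5 : (0:ℝ) ≤ 5 - 4 * β ^ 2 := by nlinarith
    rw [hM_def]; positivity
  have hG : L ^ 2 - M ^ 2 = 125 * (β ^ 2 - 1) ^ 2 * (29 * β ^ 4 - 38 * β ^ 2 + 5) := by
    rw [hL_def, hM_def]
    linear_combination (-16 * β ^ 2 * (5 - 4 * β ^ 2) ^ 2) * hs2
  have hQstar : 29 * βs ^ 4 - 38 * βs ^ 2 + 5 = 0 := by
    rw [show βs ^ 4 = (βs ^ 2) ^ 2 by ring, hβs2]
    linear_combination (36 / 29) * hq2
  have hneg : β ^ 2 - 1 < 0 := by linarith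
  have hx1 : 0 < (β ^ 2 - 1) ^ 2 := by rw [pow_two]; exact mul_pos_of_neg_of_neg hneg hneg
  constructor
  · constructor
    · -- V lam < V hex → β < βs
      intro h
      have hD0 : 0 < L - M := by linarith [hD]
      have hL0 : 0 < L := by linarith
      have hLM2 : 0 < L ^ 2 - M ^ 2 := by
        have h1 : 0 < (L - M) * (L + M) := mul_pos hD0 (by linarith)
        linarith [h1]
      have hQ : 0 < 29 * β ^ 4 - 38 * β ^ 2 + 5 := by
        by_contra hcQ
        push_neg at hcQ
        have h2 : 125 * (β ^ 2 - 1) ^ 2 * (29 * β ^ 4 - 38 * β ^ 2 + 5) ≤ 0 :=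
          mul_nonpos_of_nonneg_of_nonpos (by positivity) hcQ
        linarith [hG, h2]
      by_contra hc
      push_neg at hc
      have hsq : βs ^ 2 ≤ β ^ 2 := pow_le_pow_left₀ hβs0 hc 2
      have hf : 0 ≤ (β ^ 2 - βs ^ 2) * (38 - 29 * (β ^ 2 + βs ^ 2)) :=
        mul_nonneg (by linarith) (by linarith)
      linarith [hQ, hQstar, hf]
    · -- β < βs → V lam < V hex
      intro h
      have hsq : β ^ 2 < βs ^ 2 := pow_lt_pow_left₀ h hβ0 (by norm_num)
      have hβ9 : β ^ 2 < 9 / 29 := lt_trans hsq hβslt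
      have hL0 : 0 < L := by rw [hL_def]; linarith [sq_nonneg (β ^ 2)]
      have hf : 0 < (βs ^ 2 - β ^ 2) * (38 - 29 * (β ^ 2 + βs ^ 2)) :=
        mul_pos (by linarith) (by linarith)
      have hQ : 0 < 29 * β ^ 4 - 38 * β ^ 2 + 5 := by linarith [hQstar, hf]
      have hLM2 : 0 < L ^ 2 - M ^ 2 := by
        have h1 : 0 < (β ^ 2 - 1) ^ 2 * (29 * β ^ 4 - 38 * β ^ 2 + 5) := mul_pos hx1 hQ
        linarith [hG, h1]
      have hLM : M < L := by
        by_contra hcon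
        push_neg at hcon
        have h2 : L ^ 2 ≤ M ^ 2 := pow_le_pow_left₀ hL0.le hcon 2
        linarith
      linarith [hD]
  · -- equality case
    intro h
    have hsq : β ^ 2 = βs ^ 2 := by rw [h]
    have hβ9 : β ^ 2 < 9 / 29 := by rw [hsq]; exact hβslt
    have hL0 : 0 < L := by rw [hL_def]; linarith [sq_nonneg (β ^ 2)]
    have hQ : 29 * β ^ 4 - 38 * β ^ 2 + 5 = 0 := by
      have h4 : β ^ 4 = (βs ^ 2) ^ 2 := by rw [← hsq]; ring
      rw [h4, hsq]; linear_combination hQstar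
    have hsq0 : L ^ 2 - M ^ 2 = 0 := by rw [hG, hQ]; ring
    have hfac : (L - M) * (L + M) = 0 := by linear_combination hsq0
    rcases mul_eq_zero.1 hfac with h0 | h0
    · have : L = M := by linarith
      linarith [hD, this]
    · linarith
end

section
/- Let 0 ≤ β ≤ √5/2 and set ā = −(√2/5)(β + √(5−4β²)). Then the hexagonal energy is strictly below the disordered energy, V_β(ā, ā, ā) < 0 = V_β(0,0,0), if and only if β < 3√(5/37). -/
set_option maxHeartbeats 800000


/-- For `0 ≤ β ≤ √5/2` and `ā = -(√2/5)(β + √(5 - 4β²))`, the hexagonal energy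
is strictly below the disordered energy, `V_β(ā,ā,ā) < 0 = V_β(0,0,0)`,
iff `β < 3√(5/37)`. -/
theorem hexagonal_vs_disorder_energy (β abar : ℝ) (hβ0 : 0 ≤ β)
    (hβ1 : β ≤ Real.sqrt 5 / 2)
    (habar : abar = -(Real.sqrt 2 / 5) * (β + Real.sqrt (5 - 4 * β ^ 2))) :
    V β 0 0 0 = 0 ∧
    (V β abar abar abar < 0 ↔ β < 3 * Real.sqrt (5 / 37)) := by
  have h5 : Real.sqrt 5 ^ 2 = 5 := Real.sq_sqrt (by norm_num)
  have h50 : (0:ℝ) ≤ Real.sqrt 5 := Real.sqrt_nonneg 5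
  have hβ2 : 4 * β ^ 2 ≤ 5 := by nlinarith
  set s := Real.sqrt (5 - 4 * β ^ 2) with hsdef
  have hs0 : 0 ≤ s := Real.sqrt_nonneg _
  have hs2 : s ^ 2 = 5 - 4 * β ^ 2 := Real.sq_sqrt (by linarith)
  have h2 : Real.sqrt 2 ^ 2 = 2 := Real.sq_sqrt (by norm_num)
  have haa : abar ^ 2 = 2 / 25 * (β + s) ^ 2 := by
    rw [habar]; linear_combination ((β + s) ^ 2 / 25) * h2
  have hab3 : abar ^ 3 = -(Real.sqrt 2 * 2 / 125) * (β + s) ^ 3 := by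
    rw [habar]; linear_combination (-(Real.sqrt 2) * (β + s) ^ 3 / 125) * h2
  have hab4 : abar ^ 4 = 4 / 625 * (β + s) ^ 4 := by
    rw [habar]
    linear_combination ((Real.sqrt 2 ^ 2 + 2) * (β + s) ^ 4 / 625) * h2
  have hkey : V β abar abar abar
      = 3 / 125 * (β + s) ^ 2 * (13 * β ^ 2 - 15 - 2 * β * s) := by
    simp only [V]
    linear_combination (-9 * (1 - β ^ 2)) * haa + (6 * Real.sqrt 2 * β) * hab3
      + (45 / 4) * hab4 + (-12 * β * (β + s) ^ 3 / 125) * h2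
      + (9 / 125 * (β + s) ^ 2) * hs2
  have ht : 0 < β + s := by nlinarith [sq_nonneg (s + 2 * β)]
  have ht2 : 0 < (β + s) ^ 2 := by positivity
  set r := 3 * Real.sqrt (5 / 37) with hrdef
  have hr0 : 0 ≤ r := by positivity
  have hr2 : r ^ 2 = 45 / 37 := by
    rw [hrdef, mul_pow, Real.sq_sqrt (by norm_num : (0:ℝ) ≤ 5 / 37)]; norm_num
  refine ⟨by simp [V], ?_⟩
  rw [hkey]
  constructor
  · intro h
    have h' : 13 * β ^ 2 - 15 - 2 * β * s < 0 := by nlinarith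
    by_contra hc
    push_neg at hc
    have hb2 : 45 / 37 ≤ β ^ 2 := by nlinarith [mul_le_mul hc hc hr0 (le_trans hr0 hc)]
    have hA : 0 < 13 * β ^ 2 - 15 := by nlinarith
    have hB : 0 ≤ 2 * β * s := by positivity
    have hsq : (13 * β ^ 2 - 15) ^ 2 < (2 * β * s) ^ 2 :=
      pow_lt_pow_left₀ (by linarith) hA.le (by norm_num)
    have heq : (2 * β * s) ^ 2 = 4 * β ^ 2 * (5 - 4 * β ^ 2) := by
      linear_combination 4 * β ^ 2 * hs2
    have hf : 0 ≤ (β ^ 2 - 1) * (37 * β ^ 2 - 45) :=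
      mul_nonneg (by nlinarith) (by nlinarith)
    nlinarith [hsq, heq, hf]
  · intro h
    have hb2 : β ^ 2 < 45 / 37 := by nlinarith [mul_self_lt_mul_self hβ0 h]
    have hB : 0 ≤ 2 * β * s := by positivity
    have h' : 13 * β ^ 2 - 15 - 2 * β * s < 0 := by
      rcases le_or_gt (β ^ 2) 1 with hc | hc
      · nlinarith
      · have hf : (β ^ 2 - 1) * (37 * β ^ 2 - 45) < 0 :=
          mul_neg_of_pos_of_neg (by nlinarith) (by nlinarith)
        have heq : (2 * β * s) ^ 2 = 4 * β ^ 2 * (5 - 4 * β ^ 2) := by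
          linear_combination 4 * β ^ 2 * hs2
        have hsq : (13 * β ^ 2 - 15) ^ 2 < (2 * β * s) ^ 2 := by nlinarith [hf, heq]
        have := lt_of_pow_lt_pow_left₀ 2 hB hsq
        linarith
    exact mul_neg_of_pos_of_neg (by linarith [ht2]) h'
end

section
/- For β = 0, the global minimum of V₀ over ℝ³ equals −3, and it is attained exactly at the six lamellar points (±√2, 0, 0), (0, ±√2, 0), (0, 0, ±√2). That is, V₀(a,b,c) ≥ −3 for all (a,b,c) ∈ ℝ³ with equality if and only if exactly one coordinate is ±√2 and the other two are 0. -/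
set_option maxHeartbeats 1000000


lemma V_zero_key (a b c : ℝ) : V 0 a b c + 3 =
    3 / 4 * (a ^ 2 + b ^ 2 + c ^ 2 - 2) ^ 2
      + 3 / 2 * ((a * b) ^ 2 + (b * c) ^ 2 + (a * c) ^ 2) := by
  unfold V; ring

lemma sqrt2_sq : (Real.sqrt 2) ^ 2 = 2 := Real.sq_sqrt (by norm_num)

lemma root_cases {x : ℝ} (hx : x ^ 2 = 2) : x = Real.sqrt 2 ∨ x = -Real.sqrt 2 := by
  have h : (x - Real.sqrt 2) * (x + Real.sqrt 2) = 0 := by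
    have := sqrt2_sq; nlinarith
  rcases mul_eq_zero.mp h with h | h
  · left; linarith
  · right; linarith

/-- For `β = 0`, the global minimum of `V₀` over `ℝ³` is `-3`, attained exactly
at the six lamellar points `(±√2,0,0)`, `(0,±√2,0)`, `(0,0,±√2)`. -/
theorem global_min_V_zero :
    (∀ a b c : ℝ, -3 ≤ V 0 a b c) ∧
    (∀ a b c : ℝ, V 0 a b c = -3 ↔
      ((a, b, c) = (Real.sqrt 2, 0, 0) ∨ (a, b, c) = (-Real.sqrt 2, 0, 0) ∨
       (a, b, c) = (0, Real.sqrt 2, 0) ∨ (a, b, c) = (0, -Real.sqrt 2, 0) ∨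
       (a, b, c) = (0, 0, Real.sqrt 2) ∨ (a, b, c) = (0, 0, -Real.sqrt 2))) := by
  constructor
  · intro a b c
    have := V_zero_key a b c
    nlinarith [sq_nonneg (a ^ 2 + b ^ 2 + c ^ 2 - 2), sq_nonneg (a * b), sq_nonneg (b * c),
      sq_nonneg (a * c)]
  · intro a b c
    constructor
    · intro h
      have hk := V_zero_key a b c
      rw [h] at hk
      have hs : (a ^ 2 + b ^ 2 + c ^ 2 - 2) ^ 2 = 0 := by
        nlinarith [sq_nonneg (a * b), sq_nonneg (b * c), sq_nonneg (a * c),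
          sq_nonneg (a ^ 2 + b ^ 2 + c ^ 2 - 2)]
      have hab : a * b = 0 := by
        nlinarith [sq_nonneg (a * b), sq_nonneg (b * c), sq_nonneg (a * c)]
      have hbc : b * c = 0 := by
        nlinarith [sq_nonneg (a * b), sq_nonneg (b * c), sq_nonneg (a * c)]
      have hac : a * c = 0 := by
        nlinarith [sq_nonneg (a * b), sq_nonneg (b * c), sq_nonneg (a * c)]
      have hsum : a ^ 2 + b ^ 2 + c ^ 2 = 2 := by
        have := pow_eq_zero_iff (two_ne_zero) |>.mp hs
        linarith
      by_cases ha : a = 0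
      · by_cases hb : b = 0
        · have hc2 : c ^ 2 = 2 := by simpa [ha, hb] using hsum
          rcases root_cases hc2 with h' | h'
          · exact Or.inr (Or.inr (Or.inr (Or.inr (Or.inl (by simp [ha, hb, h'])))))
          · exact Or.inr (Or.inr (Or.inr (Or.inr (Or.inr (by simp [ha, hb, h'])))))
        · have hc : c = 0 := by
            rcases mul_eq_zero.mp hbc with h' | h'
            · exact absurd h' hb
            · exact h'
          have hb2 : b ^ 2 = 2 := by simpa [ha, hc] using hsum
          rcases root_cases hb2 with h' | h'
          · exact Or.inr (Or.inr (Or.inl (by simp [ha, hc, h'])))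
          · exact Or.inr (Or.inr (Or.inr (Or.inl (by simp [ha, hc, h']))))
      · have hb : b = 0 := by
          rcases mul_eq_zero.mp hab with h' | h'
          · exact absurd h' ha
          · exact h'
        have hc : c = 0 := by
          rcases mul_eq_zero.mp hac with h' | h'
          · exact absurd h' ha
          · exact h'
        have ha2 : a ^ 2 = 2 := by simpa [hb, hc] using hsum
        rcases root_cases ha2 with h' | h'
        · exact Or.inl (by simp [hb, hc, h'])
        · exact Or.inr (Or.inl (by simp [hb, hc, h']))
    · intro h
      have h2 := sqrt2_sq
      rcases h with h | h | h | h | h | h <;>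
        · simp only [Prod.mk.injEq] at h
          obtain ⟨ha, hb, hc⟩ := h
          subst ha; subst hb; subst hc
          unfold V
          nlinarith
end
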